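/- arXiv:2303.01959 — 3 statements merged into one kernel-verified Lean document; each statement's English description precedes it below -/
import Mathlib

section
/- (Certified perturbation size against point modification attacks.) Suppose c ≥ 2 and the ensemble classifier predicts h(P) = y for a point cloud P. Let t(P) = ⌊Gap(P,y)/4⌋. Then for every point cloud P' with |P'| = |P| and d(P,P') ≤ t(P) (i.e., P' is obtained from P by modifying at most t(P) points), the ensemble classifier predicts h(P') = y. -/
/-- The `i`-th sub-point cloud of a point cloud `P`: the points of `P` hashed to group `i`. -/
def subCloud {X : Type*} [DecidableEq X] (m : ℕ) (r : X → Fin m) (P : Finset X) (i : Fin m) :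
    Finset X :=
  P.filter (fun e => r e = i)

/-- The label frequency `M_l(P)`: number of nonempty sub-point clouds classified as `l` by `f`. -/
def labelFreq {X : Type*} [DecidableEq X] (m : ℕ) {c : ℕ} (r : X → Fin m)
    (f : Finset X → Fin c) (P : Finset X) (l : Fin c) : ℕ :=
  (Finset.univ.filter
    (fun i : Fin m => (subCloud m r P i).Nonempty ∧ f (subCloud m r P i) = l)).card

/-- The ensemble classifier: the smallest label maximizing the label frequency. -/
def ensemble {X : Type*} [DecidableEq X] (m : ℕ) {c : ℕ} [NeZero c]
    (r : X → Fin m) (f : Finset X → Fin c) (P : Finset X) : Fin c :=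
  (Finset.univ.filter
    (fun l : Fin c => ∀ l', labelFreq m r f P l' ≤ labelFreq m r f P l)).min'
    (by
      obtain ⟨b, _, hb⟩ := Finset.exists_max_image (Finset.univ : Finset (Fin c))
        (labelFreq m r f P) ⟨0, Finset.mem_univ 0⟩
      exact ⟨b, Finset.mem_filter.mpr ⟨Finset.mem_univ _, fun l' => hb l' (Finset.mem_univ _)⟩⟩)

/-- `Gap(P,y) = M_y(P) − max_{l ≠ y} (M_l(P) + 𝟙(y > l))`. -/
def gap {X : Type*} [DecidableEq X] (m : ℕ) {c : ℕ} (r : X → Fin m)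
    (f : Finset X → Fin c) (P : Finset X) (y : Fin c) : ℕ :=
  labelFreq m r f P y -
    (Finset.univ.filter (fun l : Fin c => l ≠ y)).sup
      (fun l => labelFreq m r f P l + if l < y then 1 else 0)

/-- The perturbation size `d(P,P') = max(|P|,|P'|) − |P ∩ P'|`. -/
def pertSize {X : Type*} [DecidableEq X] (P P' : Finset X) : ℕ :=
  max P.card P'.card - (P ∩ P').card

lemma freq_le {X : Type*} [DecidableEq X] (m : ℕ) {c : ℕ} (r : X → Fin m)
    (f : Finset X → Fin c) (P Q : Finset X) (l : Fin c) :
    labelFreq m r f Q l ≤ labelFreq m r f P l +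
      (Finset.univ.filter (fun i : Fin m => subCloud m r P i ≠ subCloud m r Q i)).card := by
  unfold labelFreq
  have hsub : (Finset.univ.filter
      (fun i : Fin m => (subCloud m r Q i).Nonempty ∧ f (subCloud m r Q i) = l)) ⊆
    (Finset.univ.filter
      (fun i : Fin m => (subCloud m r P i).Nonempty ∧ f (subCloud m r P i) = l)) ∪
    (Finset.univ.filter (fun i : Fin m => subCloud m r P i ≠ subCloud m r Q i)) := by
    intro i hi
    simp only [Finset.mem_filter, Finset.mem_union, Finset.mem_univ, true_and] at *
    by_cases h : subCloud m r P i = subCloud m r Q i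
    · left; rw [h]; exact hi
    · right; exact h
  calc _ ≤ _ := Finset.card_le_card hsub
    _ ≤ _ := Finset.card_union_le _ _

lemma delta_le {X : Type*} [DecidableEq X] (m : ℕ) (r : X → Fin m) (P Q : Finset X) :
    (Finset.univ.filter (fun i : Fin m => subCloud m r P i ≠ subCloud m r Q i)).card ≤
      (P \ Q).card + (Q \ P).card := by
  calc _ ≤ (((P \ Q) ∪ (Q \ P)).image r).card := by
        apply Finset.card_le_card
        intro i hi
        simp only [Finset.mem_filter, Finset.mem_univ, true_and] at hi
        have h2 : ¬ ∀ e, e ∈ subCloud m r P i ↔ e ∈ subCloud m r Q i :=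
          fun h => hi (Finset.ext h)
        push_neg at h2
        obtain ⟨e, he⟩ := h2
        simp only [subCloud, Finset.mem_filter] at he
        rw [Finset.mem_image]
        refine ⟨e, ?_⟩
        simp only [Finset.mem_union, Finset.mem_sdiff]
        tauto
    _ ≤ ((P \ Q) ∪ (Q \ P)).card := Finset.card_image_le
    _ ≤ _ := Finset.card_union_le _ _

lemma ensemble_eq {X : Type*} [DecidableEq X] (m : ℕ) {c : ℕ} [NeZero c]
    (r : X → Fin m) (f : Finset X → Fin c) (Q : Finset X) (y : Fin c)
    (hmax : ∀ l, labelFreq m r f Q l ≤ labelFreq m r f Q y)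
    (hstrict : ∀ l, l < y → labelFreq m r f Q l < labelFreq m r f Q y) :
    ensemble m r f Q = y := by
  unfold ensemble
  apply le_antisymm
  · exact Finset.min'_le _ _ (Finset.mem_filter.mpr ⟨Finset.mem_univ _, hmax⟩)
  · apply Finset.le_min'
    intro l hl
    simp only [Finset.mem_filter, Finset.mem_univ, true_and] at hl
    by_contra h
    push_neg at h
    exact absurd (hl y) (not_le.mpr (hstrict l h))

lemma ensemble_max {X : Type*} [DecidableEq X] (m : ℕ) {c : ℕ} [NeZero c]
    (r : X → Fin m) (f : Finset X → Fin c) (P : Finset X) (y : Fin c)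
    (hy : ensemble m r f P = y) :
    (∀ l, labelFreq m r f P l ≤ labelFreq m r f P y) ∧
    (∀ l, l < y → labelFreq m r f P l < labelFreq m r f P y) := by
  have hmem := Finset.min'_mem (Finset.univ.filter
    (fun l : Fin c => ∀ l', labelFreq m r f P l' ≤ labelFreq m r f P l)) (by
      obtain ⟨b, _, hb⟩ := Finset.exists_max_image (Finset.univ : Finset (Fin c))
        (labelFreq m r f P) ⟨0, Finset.mem_univ 0⟩
      exact ⟨b, Finset.mem_filter.mpr ⟨Finset.mem_univ _, fun l' => hb l' (Finset.mem_univ _)⟩⟩)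
  rw [show (Finset.univ.filter
    (fun l : Fin c => ∀ l', labelFreq m r f P l' ≤ labelFreq m r f P l)).min' _ =
      ensemble m r f P from rfl, hy] at hmem
  simp only [Finset.mem_filter, Finset.mem_univ, true_and] at hmem
  refine ⟨hmem, fun l hl => ?_⟩
  by_contra h
  push_neg at h
  have heq : ∀ l', labelFreq m r f P l' ≤ labelFreq m r f P l :=
    fun l' => le_trans (hmem l') (h)
  have : ensemble m r f P ≤ l :=
    Finset.min'_le _ _ (Finset.mem_filter.mpr ⟨Finset.mem_univ _, heq⟩)
  rw [hy] at this
  exact absurd hl (not_lt.mpr this)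

/-- certified perturbation size against point modification attacks.
If `h(P) = y` and `t(P) = ⌊Gap(P,y)/4⌋`, then `h(P') = y` for every `P'` with `|P'| = |P|`
and `d(P,P') ≤ t(P)`. -/
theorem certified_modification {X : Type*} [DecidableEq X] (m : ℕ) (hm : 1 ≤ m)
    {c : ℕ} [NeZero c] (hc : 2 ≤ c) (r : X → Fin m) (f : Finset X → Fin c)
    (P : Finset X) (y : Fin c) (hy : ensemble m r f P = y) :
    ∀ P' : Finset X, P'.card = P.card → pertSize P P' ≤ gap m r f P y / 4 →
      ensemble m r f P' = y := by
  intro P' hcard hpert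
  by_cases hPP : P = P'
  · rw [← hPP]; exact hy
  set d := pertSize P P' with hdd
  have hmaxc : max P.card P'.card = P.card := by omega
  have hinter : (P ∩ P').card ≤ P.card := Finset.card_le_card Finset.inter_subset_left
  have hd1 : 1 ≤ d := by
    rcases Nat.eq_zero_or_pos d with h0 | h
    · exfalso
      apply hPP
      have h1 : P.card ≤ (P ∩ P').card := by
        have : max P.card P'.card - (P ∩ P').card = 0 := h0
        omega
      have h2 : P ∩ P' = P :=
        Finset.eq_of_subset_of_card_le Finset.inter_subset_left (by omega)
      have h3 : P ⊆ P' := by rw [← h2]; exact Finset.inter_subset_right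
      exact Finset.eq_of_subset_of_card_le h3 (by omega)
    · exact h
  set S := (Finset.univ.filter (fun l : Fin c => l ≠ y)).sup
      (fun l => labelFreq m r f P l + if l < y then 1 else 0) with hS
  have hgap : d * 4 ≤ labelFreq m r f P y - S := by
    rw [← Nat.le_div_iff_mul_le (by norm_num)]
    exact hpert
  have hkey : ∀ l, l ≠ y →
      labelFreq m r f P l + (if l < y then 1 else 0) + 4 * d ≤ labelFreq m r f P y := by
    intro l hl
    have hle : labelFreq m r f P l + (if l < y then 1 else 0) ≤ S :=
      Finset.le_sup (f := fun l => labelFreq m r f P l + if l < y then 1 else 0) (b := l)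
        (Finset.mem_filter.mpr ⟨Finset.mem_univ _, hl⟩)
    omega
  have hdval : d = P.card - (P ∩ P').card := by
    rw [hdd]; unfold pertSize; rw [hmaxc]
  -- bound on number of changed subclouds
  have e1 : (P \ P').card + (P ∩ P').card = P.card := by
    rw [Finset.card_sdiff_add_card_inter]
  have e2 : (P' \ P).card + (P' ∩ P).card = P'.card := by
    rw [Finset.card_sdiff_add_card_inter]
  have einter : (P' ∩ P).card = (P ∩ P').card := by rw [Finset.inter_comm]
  have hD1 : (Finset.univ.filter
      (fun i : Fin m => subCloud m r P i ≠ subCloud m r P' i)).card ≤ 2 * d := by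
    have := delta_le m r P P'
    omega
  have hD2 : (Finset.univ.filter
      (fun i : Fin m => subCloud m r P' i ≠ subCloud m r P i)).card ≤ 2 * d := by
    have := delta_le m r P' P
    omega
  have hA : ∀ l, labelFreq m r f P' l ≤ labelFreq m r f P l + 2 * d := by
    intro l
    have := freq_le m r f P P' l
    omega
  have hB : ∀ l, labelFreq m r f P l ≤ labelFreq m r f P' l + 2 * d := by
    intro l
    have := freq_le m r f P' P l
    omega
  apply ensemble_eq
  · intro l
    by_cases hl : l = y
    · rw [hl]
    · have h1 := hkey l hl
      have h2 := hA l
      have h3 := hB y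
      by_cases hlt : l < y <;> simp [hlt] at h1 <;> omega
  · intro l hl
    have h1 := hkey l (ne_of_lt hl)
    have h2 := hA l
    have h3 := hB y
    simp [hl] at h1
    omega
end

section
/- (Theorem 1: certified perturbation size against arbitrary point perturbation attacks.) Suppose c ≥ 2 and the ensemble classifier predicts h(P) = y for a point cloud P. Let t(P) = ⌊Gap(P,y)/4⌋. Then for every point cloud P' with d(P,P') ≤ t(P) (i.e., P' is obtained from P by any combination of at most t(P) point additions, deletions, and modifications), the ensemble classifier predicts h(P') = y. -/
/-- Label frequencies change by at most the number of changed sub-clouds. -/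
lemma labelFreq_le_add {X : Type*} [DecidableEq X] (m : ℕ) {c : ℕ} (r : X → Fin m)
    (f : Finset X → Fin c) (P P' : Finset X) (l : Fin c) :
    labelFreq m r f P' l ≤ labelFreq m r f P l +
      (Finset.univ.filter (fun i : Fin m => subCloud m r P i ≠ subCloud m r P' i)).card := by
  classical
  unfold labelFreq
  refine le_trans (Finset.card_le_card ?_) (Finset.card_union_le _ _)
  intro i hi
  simp only [Finset.mem_filter, Finset.mem_univ, true_and] at hi
  by_cases h : subCloud m r P i = subCloud m r P' i
  · exact Finset.mem_union_left _ (by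
      simp only [Finset.mem_filter, Finset.mem_univ, true_and, h]; exact hi)
  · exact Finset.mem_union_right _ (by
      simp only [Finset.mem_filter, Finset.mem_univ, true_and]; exact h)

/-- Theorem 1: certified perturbation size against arbitrary point
perturbation attacks. If `h(P) = y` and `t(P) = ⌊Gap(P,y)/4⌋`, then `h(P') = y` for every
`P'` with `d(P,P') ≤ t(P)`. -/
theorem certified_perturbation {X : Type*} [DecidableEq X] (m : ℕ) (hm : 1 ≤ m)
    {c : ℕ} [NeZero c] (hc : 2 ≤ c) (r : X → Fin m) (f : Finset X → Fin c)
    (P : Finset X) (y : Fin c) (hy : ensemble m r f P = y) :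
    ∀ P' : Finset X, pertSize P P' ≤ gap m r f P y / 4 →
      ensemble m r f P' = y := by
  classical
  intro P' hP'
  set t := gap m r f P y / 4 with ht
  set M := labelFreq m r f P with hM
  set M' := labelFreq m r f P' with hM'
  -- facts about P from hy
  have hy_mem : y ∈ Finset.univ.filter
      (fun l : Fin c => ∀ l', M l' ≤ M l) := hy ▸ Finset.min'_mem _ _
  have hy_max : ∀ l', M l' ≤ M y := (Finset.mem_filter.mp hy_mem).2
  have hy_strict : ∀ l : Fin c, l < y → M l < M y := by
    intro l hl
    rcases lt_or_ge (M l) (M y) with h | h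
    · exact h
    · exfalso
      have hlmem : l ∈ Finset.univ.filter (fun l : Fin c => ∀ l', M l' ≤ M l) :=
        Finset.mem_filter.mpr ⟨Finset.mem_univ _, fun l' => le_trans (hy_max l') h⟩
      have hmin : ensemble m r f P ≤ l := Finset.min'_le _ l hlmem
      rw [hy] at hmin
      exact absurd hmin (not_le.mpr hl)
  set S := (Finset.univ.filter (fun l : Fin c => l ≠ y)).sup
      (fun l => M l + if l < y then 1 else 0) with hS
  have hsup_le : S ≤ M y := by
    apply Finset.sup_le
    intro l hl
    have hlne : l ≠ y := (Finset.mem_filter.mp hl).2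
    by_cases hlt : l < y
    · simp only [hlt, if_pos]
      exact Nat.succ_le_of_lt (hy_strict l hlt)
    · simp only [hlt, if_neg, Nat.not_lt, add_zero]
      exact hy_max l
  have hgap : S + gap m r f P y = M y := by
    rw [gap]; exact Nat.add_sub_cancel' hsup_le
  have h4t : S + 4 * t ≤ M y := by
    rw [← hgap]
    exact Nat.add_le_add_left (Nat.mul_div_le (gap m r f P y) 4) _
  -- the set of changed indices
  set D := (Finset.univ.filter
      (fun i : Fin m => subCloud m r P i ≠ subCloud m r P' i)).card with hD
  have hD_le : D ≤ 2 * t := by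
    have hsub : (Finset.univ.filter
        (fun i : Fin m => subCloud m r P i ≠ subCloud m r P' i)) ⊆
        ((P \ P') ∪ (P' \ P)).image r := by
      intro i hi
      simp only [Finset.mem_filter, Finset.mem_univ, true_and] at hi
      have : ∃ e, ¬ (e ∈ subCloud m r P i ↔ e ∈ subCloud m r P' i) := by
        by_contra h
        push_neg at h
        exact hi (Finset.ext fun e => h e)
      obtain ⟨e, he⟩ := this
      simp only [subCloud, Finset.mem_filter] at he
      have hre : r e = i ∧ (e ∈ P ∧ e ∉ P' ∨ e ∈ P' ∧ e ∉ P) := by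
        by_cases h1 : e ∈ P <;> by_cases h2 : e ∈ P' <;> by_cases h3 : r e = i <;> tauto
      refine Finset.mem_image.mpr ⟨e, ?_, hre.1⟩
      rcases hre.2 with ⟨h1, h2⟩ | ⟨h1, h2⟩
      · exact Finset.mem_union_left _ (Finset.mem_sdiff.mpr ⟨h1, h2⟩)
      · exact Finset.mem_union_right _ (Finset.mem_sdiff.mpr ⟨h1, h2⟩)
    have hcard1 : (P \ P').card ≤ t := by
      have : P \ P' = P \ (P ∩ P') := by rw [Finset.sdiff_inter_self_left]
      rw [this, Finset.card_sdiff_of_subset Finset.inter_subset_left]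
      calc P.card - (P ∩ P').card ≤ max P.card P'.card - (P ∩ P').card :=
            Nat.sub_le_sub_right (le_max_left _ _) _
        _ ≤ t := hP'
    have hcard2 : (P' \ P).card ≤ t := by
      have : P' \ P = P' \ (P ∩ P') := by rw [Finset.sdiff_inter_self_right]
      rw [this, Finset.card_sdiff_of_subset Finset.inter_subset_right]
      calc P'.card - (P ∩ P').card ≤ max P.card P'.card - (P ∩ P').card :=
            Nat.sub_le_sub_right (le_max_right _ _) _
        _ ≤ t := hP'
    calc D ≤ (((P \ P') ∪ (P' \ P)).image r).card := Finset.card_le_card hsub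
      _ ≤ ((P \ P') ∪ (P' \ P)).card := Finset.card_image_le
      _ ≤ (P \ P').card + (P' \ P).card := Finset.card_union_le _ _
      _ ≤ t + t := Nat.add_le_add hcard1 hcard2
      _ = 2 * t := (two_mul t).symm
  have hle1 : ∀ l, M' l ≤ M l + D := fun l => labelFreq_le_add m r f P P' l
  have hle2 : ∀ l, M l ≤ M' l + D := by
    intro l
    have := labelFreq_le_add m r f P' P l
    have hsymm : (Finset.univ.filter
        (fun i : Fin m => subCloud m r P' i ≠ subCloud m r P i)).card = D := by
      rw [hD]; congr 1; ext i; simp [ne_comm]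
    rw [hsymm] at this
    exact this
  -- key inequality for P'
  have hkey : ∀ l : Fin c, l ≠ y → M' l + (if l < y then 1 else 0) ≤ M' y := by
    intro l hl
    have h1 : M l + (if l < y then 1 else 0) ≤ S := by
      rw [hS]
      exact Finset.le_sup (f := fun l : Fin c => M l + if l < y then 1 else 0)
        (Finset.mem_filter.mpr ⟨Finset.mem_univ l, hl⟩)
    have h2 : M' l + (if l < y then 1 else 0) ≤ S + 2 * t := by
      calc M' l + (if l < y then 1 else 0) ≤ (M l + D) + (if l < y then 1 else 0) :=
            Nat.add_le_add_right (hle1 l) _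
        _ = (M l + (if l < y then 1 else 0)) + D := by ring
        _ ≤ S + 2 * t := Nat.add_le_add h1 hD_le
    have h3 : S + 2 * t ≤ M' y := by
      have : S + 2 * t + 2 * t ≤ M' y + 2 * t := by
        calc S + 2 * t + 2 * t = S + 4 * t := by ring
          _ ≤ M y := h4t
          _ ≤ M' y + D := hle2 y
          _ ≤ M' y + 2 * t := Nat.add_le_add_left hD_le _
      exact Nat.le_of_add_le_add_right this
    exact le_trans h2 h3
  -- conclude
  have hy_max' : ∀ l', M' l' ≤ M' y := by
    intro l'
    by_cases h : l' = y
    · exact h ▸ le_refl _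
    · exact le_trans (Nat.le_add_right _ _) (hkey l' h)
  have hymem' : y ∈ Finset.univ.filter (fun l : Fin c => ∀ l', M' l' ≤ M' l) :=
    Finset.mem_filter.mpr ⟨Finset.mem_univ _, hy_max'⟩
  unfold ensemble
  apply le_antisymm
  · exact Finset.min'_le _ _ hymem'
  · apply Finset.le_min'
    intro l hl
    by_contra hcon
    push_neg at hcon
    have hlne : l ≠ y := ne_of_lt hcon
    have h1 : M' l + 1 ≤ M' y := by
      have := hkey l hlne
      simpa [hcon] using this
    have h2 : M' y ≤ M' l := (Finset.mem_filter.mp hl).2 y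
    omega
end

section
/- (Theorem 2, tightness for point modification/perturbation attacks.) Let P be a point cloud such that every sub-point cloud P_i (i ∈ Fin m) contains at least 2 points, and assume that for every i ∈ Fin m there exists a point e ∉ P with r(e) = i. Suppose c ≥ 2, the ensemble classifier built from a base classifier f predicts h(P) = y, let t(P) = ⌊Gap(P,y)/4⌋, and assume 2·(t(P)+1) ≤ M_y(P). Then there exist a base point cloud classifier f' whose label frequencies on P agree with those of f (M'_l(P) = M_l(P) for every label l) and a point cloud P' with |P'| = |P| and d(P,P') = t(P) + 1, such that the ensemble classifier h' built from f' satisfies h'(P') ≠ h'(P). -/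
lemma ensemble_congr {X : Type*} [DecidableEq X] (m : ℕ) {c : ℕ} [NeZero c]
    (r : X → Fin m) (f g : Finset X → Fin c) (Q : Finset X)
    (h : ∀ l, labelFreq m r f Q l = labelFreq m r g Q l) :
    ensemble m r f Q = ensemble m r g Q := by
  have hset : (Finset.univ.filter
      (fun l : Fin c => ∀ l', labelFreq m r f Q l' ≤ labelFreq m r f Q l)) =
      (Finset.univ.filter
      (fun l : Fin c => ∀ l', labelFreq m r g Q l' ≤ labelFreq m r g Q l)) := by
    ext l; simp [h]
  unfold ensemble
  apply le_antisymm
  · apply Finset.min'_le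
    rw [hset]; exact Finset.min'_mem _ _
  · apply Finset.min'_le
    rw [← hset]; exact Finset.min'_mem _ _

lemma ensemble_mem {X : Type*} [DecidableEq X] (m : ℕ) {c : ℕ} [NeZero c]
    (r : X → Fin m) (f : Finset X → Fin c) (Q : Finset X) :
    ensemble m r f Q ∈ Finset.univ.filter
      (fun l : Fin c => ∀ l', labelFreq m r f Q l' ≤ labelFreq m r f Q l) := by
  unfold ensemble
  exact Finset.min'_mem _ _

lemma ensemble_le {X : Type*} [DecidableEq X] (m : ℕ) {c : ℕ} [NeZero c]
    (r : X → Fin m) (f : Finset X → Fin c) (Q : Finset X) (l : Fin c)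
    (hl : ∀ l', labelFreq m r f Q l' ≤ labelFreq m r f Q l) :
    ensemble m r f Q ≤ l := by
  unfold ensemble
  exact Finset.min'_le _ _ (Finset.mem_filter.2 ⟨Finset.mem_univ _, hl⟩)

/-- Theorem 2, tightness for point modification/perturbation attacks. -/
theorem tightness_modification {X : Type*} [DecidableEq X] (m : ℕ) (hm : 1 ≤ m)
    {c : ℕ} [NeZero c] (hc : 2 ≤ c) (r : X → Fin m) (f : Finset X → Fin c)
    (P : Finset X) (y : Fin c)
    (hne : ∀ i : Fin m, 2 ≤ (subCloud m r P i).card)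
    (hext : ∀ i : Fin m, ∃ e : X, e ∉ P ∧ r e = i)
    (hy : ensemble m r f P = y)
    (hbig : 2 * (gap m r f P y / 4 + 1) ≤ labelFreq m r f P y) :
    ∃ (f' : Finset X → Fin c) (P' : Finset X),
      (∀ l : Fin c, labelFreq m r f' P l = labelFreq m r f P l) ∧
      P'.card = P.card ∧ pertSize P P' = gap m r f P y / 4 + 1 ∧
      ensemble m r f' P' ≠ ensemble m r f' P := by
  classical
  set G := gap m r f P y with hG
  set t := G / 4 with ht
  -- maximizer facts for y
  have hymem := ensemble_mem m r f P
  rw [hy] at hymem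
  have hymax : ∀ l, labelFreq m r f P l ≤ labelFreq m r f P y := (Finset.mem_filter.1 hymem).2
  have hymin : ∀ l, (∀ l', labelFreq m r f P l' ≤ labelFreq m r f P l) → y ≤ l := by
    intro l hl
    have := ensemble_le m r f P l hl
    rwa [hy] at this
  have hbound : ∀ l : Fin c, l ≠ y →
      labelFreq m r f P l + (if l < y then 1 else 0) ≤ labelFreq m r f P y := by
    intro l hl
    by_cases hlt : l < y
    · rw [if_pos hlt]
      rcases lt_or_eq_of_le (hymax l) with h | h
      · omega
      · exfalso
        have := hymin l (fun l' => le_trans (hymax l') (le_of_eq h.symm))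
        exact absurd this (not_le.2 hlt)
    · rw [if_neg hlt]; simpa using hymax l
  -- pick the runner-up label ls
  have hDne : (Finset.univ.filter (fun l : Fin c => l ≠ y)).Nonempty := by
    have h2 : (1 : ℕ) < c := by omega
    have h0 : (0 : ℕ) < c := by omega
    rcases eq_or_ne y ⟨0, h0⟩ with h | h
    · refine ⟨⟨1, h2⟩, Finset.mem_filter.2 ⟨Finset.mem_univ _, ?_⟩⟩
      rw [h]
      intro hcon
      exact absurd (congrArg Fin.val hcon) (by simp)
    · exact ⟨⟨0, h0⟩, Finset.mem_filter.2 ⟨Finset.mem_univ _, Ne.symm h⟩⟩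
  obtain ⟨ls, hlsmem, hsup⟩ := Finset.exists_mem_eq_sup _ hDne
    (fun l => labelFreq m r f P l + if l < y then 1 else 0)
  have hlsne : ls ≠ y := (Finset.mem_filter.1 hlsmem).2
  have hgapeq : labelFreq m r f P ls + (if ls < y then 1 else 0) + G = labelFreq m r f P y := by
    have h1 := hbound ls hlsne
    have h2 : G = labelFreq m r f P y -
        (labelFreq m r f P ls + if ls < y then 1 else 0) := by
      rw [hG]; unfold gap; rw [hsup]
    omega
  -- the sets of groups with a given original label
  set Al : Fin c → Finset (Fin m) := fun l => Finset.univ.filter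
    (fun i : Fin m => (subCloud m r P i).Nonempty ∧ f (subCloud m r P i) = l) with hAl
  have hAlcard : ∀ l, (Al l).card = labelFreq m r f P l := fun l => rfl
  -- choose the 2(t+1) groups to attack
  have hA : 2 * (t + 1) ≤ (Al y).card := by rw [hAlcard]; exact hbig
  obtain ⟨B, hBsub, hBcard⟩ := Finset.exists_subset_card_eq (s := Al y) (n := 2 * (t + 1)) hA
  obtain ⟨I, hIsub, hIcard⟩ := Finset.exists_subset_card_eq (s := B) (n := t + 1) (by omega)
  set J := B \ I with hJdef
  have hJcard : J.card = t + 1 := by rw [hJdef, Finset.card_sdiff_of_subset hIsub, hBcard]; omega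
  have hIJdisj : Disjoint I J := Finset.disjoint_sdiff
  have hJsub : J ⊆ B := Finset.sdiff_subset
  have hIA : I ⊆ Al y := hIsub.trans hBsub
  have hJA : J ⊆ Al y := hJsub.trans hBsub
  -- choice of removed points and added points
  have hpe : ∀ i : Fin m, ∃ x, x ∈ subCloud m r P i := by
    intro i
    have := hne i
    exact Finset.card_pos.1 (by omega)
  choose p hp using hpe
  choose e he hre using hext
  have hrp : ∀ i, r (p i) = i := fun i => (Finset.mem_filter.1 (hp i)).2
  have hpP : ∀ i, p i ∈ P := fun i => (Finset.mem_filter.1 (hp i)).1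
  -- the perturbed point cloud
  set Q : Finset X := (P \ I.image p) ∪ J.image e with hQdef
  -- sub-cloud computations
  have hsub1 : ∀ i ∈ I, subCloud m r Q i = (subCloud m r P i).erase (p i) := by
    intro i hi
    ext x
    simp only [subCloud, Finset.mem_filter, Finset.mem_erase, hQdef, Finset.mem_union,
      Finset.mem_sdiff, Finset.mem_image]
    constructor
    · rintro ⟨hx, hrx⟩
      rcases hx with ⟨hxP, hxnI⟩ | ⟨j, hj, hje⟩
      · refine ⟨?_, hxP, hrx⟩
        intro hxe
        exact hxnI ⟨i, hi, hxe.symm⟩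
      · exfalso
        have hji : j = i := by rw [← hre j, hje, hrx]
        exact Finset.disjoint_left.1 hIJdisj hi (hji ▸ hj)
    · rintro ⟨hxp, hxP, hrx⟩
      refine ⟨Or.inl ⟨hxP, ?_⟩, hrx⟩
      rintro ⟨k, hk, hkx⟩
      have hki : k = i := by rw [← hrp k, hkx, hrx]
      exact hxp (by rw [← hkx, hki])
  have hsub2 : ∀ j ∈ J, subCloud m r Q j = insert (e j) (subCloud m r P j) := by
    intro j hj
    ext x
    simp only [subCloud, Finset.mem_filter, Finset.mem_insert, hQdef, Finset.mem_union,
      Finset.mem_sdiff, Finset.mem_image]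
    constructor
    · rintro ⟨hx, hrx⟩
      rcases hx with ⟨hxP, _⟩ | ⟨k, hk, hke⟩
      · exact Or.inr ⟨hxP, hrx⟩
      · have hkj : k = j := by rw [← hre k, hke, hrx]
        exact Or.inl (by rw [← hke, hkj])
    · rintro (hxe | ⟨hxP, hrx⟩)
      · exact ⟨Or.inr ⟨j, hj, hxe.symm⟩, by rw [hxe, hre]⟩
      · refine ⟨Or.inl ⟨hxP, ?_⟩, hrx⟩
        rintro ⟨k, hk, hkx⟩
        have hkj : k = j := by rw [← hrp k, hkx, hrx]
        exact Finset.disjoint_left.1 hIJdisj (hkj ▸ hk) hj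
  have hsub3 : ∀ i : Fin m, i ∉ I → i ∉ J → subCloud m r Q i = subCloud m r P i := by
    intro i hiI hiJ
    ext x
    simp only [subCloud, Finset.mem_filter, hQdef, Finset.mem_union, Finset.mem_sdiff,
      Finset.mem_image]
    constructor
    · rintro ⟨hx, hrx⟩
      rcases hx with ⟨hxP, _⟩ | ⟨k, hk, hke⟩
      · exact ⟨hxP, hrx⟩
      · exfalso
        have hki : k = i := by rw [← hre k, hke, hrx]
        exact hiJ (hki ▸ hk)
    · rintro ⟨hxP, hrx⟩
      refine ⟨Or.inl ⟨hxP, ?_⟩, hrx⟩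
      rintro ⟨k, hk, hkx⟩
      have hki : k = i := by rw [← hrp k, hkx, hrx]
      exact hiI (hki ▸ hk)
  -- the modified base classifier
  set F : Finset X → Fin c := fun S =>
    if (∃ i ∈ I, S = (subCloud m r P i).erase (p i)) ∨
       (∃ j ∈ J, S = insert (e j) (subCloud m r P j)) then ls else f S with hFdef
  have hFP : ∀ i : Fin m, F (subCloud m r P i) = f (subCloud m r P i) := by
    intro i
    have hno : ¬ ((∃ k ∈ I, subCloud m r P i = (subCloud m r P k).erase (p k)) ∨
        (∃ j ∈ J, subCloud m r P i = insert (e j) (subCloud m r P j))) := by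
      rintro (⟨k, hk, hkey⟩ | ⟨j, hj, hkey⟩)
      · obtain ⟨x, hx, hxne⟩ : ∃ b ∈ subCloud m r P k, b ≠ p k :=
          Finset.exists_mem_ne (by have := hne k; omega) (p k)
        have hxmem : x ∈ subCloud m r P i := by
          rw [hkey]; exact Finset.mem_erase.2 ⟨hxne, hx⟩
        have hik : i = k :=
          ((Finset.mem_filter.1 hxmem).2).symm.trans (Finset.mem_filter.1 hx).2
        subst hik
        have hpmem := hp i
        rw [hkey] at hpmem
        exact (Finset.mem_erase.1 hpmem).1 rfl
      · have : e j ∈ subCloud m r P i := by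
          rw [hkey]; exact Finset.mem_insert_self _ _
        exact he j ((Finset.mem_filter.1 this).1)
    rw [hFdef]
    simp only
    rw [if_neg hno]
  -- F on sub-clouds of Q
  have hFQ1 : ∀ i ∈ I, F (subCloud m r Q i) = ls := by
    intro i hi
    rw [hsub1 i hi, hFdef]
    simp only
    rw [if_pos (Or.inl ⟨i, hi, rfl⟩)]
  have hFQ2 : ∀ j ∈ J, F (subCloud m r Q j) = ls := by
    intro j hj
    rw [hsub2 j hj, hFdef]
    simp only
    rw [if_pos (Or.inr ⟨j, hj, rfl⟩)]
  -- nonemptiness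
  have hQne1 : ∀ i ∈ I, (subCloud m r Q i).Nonempty := by
    intro i hi
    rw [hsub1 i hi]
    obtain ⟨x, hx, hxne⟩ : ∃ b ∈ subCloud m r P i, b ≠ p i :=
      Finset.exists_mem_ne (by have := hne i; omega) (p i)
    exact ⟨x, Finset.mem_erase.2 ⟨hxne, hx⟩⟩
  have hQne2 : ∀ j ∈ J, (subCloud m r Q j).Nonempty := by
    intro j hj
    rw [hsub2 j hj]
    exact ⟨e j, Finset.mem_insert_self _ _⟩
  have hPne : ∀ i : Fin m, (subCloud m r P i).Nonempty := by
    intro i; exact Finset.card_pos.1 (by have := hne i; omega)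
  -- label frequencies of F on P agree with those of f
  have hfreq : ∀ l : Fin c, labelFreq m r F P l = labelFreq m r f P l := by
    intro l
    unfold labelFreq
    congr 1
    ext i
    simp [hFP i]
  have hensP : ensemble m r F P = y := (ensemble_congr m r F f P hfreq).trans hy
  -- label frequency computations on Q
  have hIJAy : I ∪ J ⊆ Al y := Finset.union_subset hIA hJA
  have hSy : Finset.univ.filter
      (fun i : Fin m => (subCloud m r Q i).Nonempty ∧ F (subCloud m r Q i) = y) =
      Al y \ (I ∪ J) := by
    ext i
    by_cases hiI : i ∈ I
    · simp [Finset.mem_filter, Finset.mem_sdiff, Finset.mem_union, hiI, hFQ1 i hiI, hlsne]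
    · by_cases hiJ : i ∈ J
      · simp [Finset.mem_filter, Finset.mem_sdiff, Finset.mem_union, hiJ, hFQ2 i hiJ, hlsne]
      · simp [Finset.mem_filter, Finset.mem_sdiff, Finset.mem_union, hiI, hiJ,
          hsub3 i hiI hiJ, hFP i, hAl]
  have hMy' : labelFreq m r F Q y = labelFreq m r f P y - 2 * (t + 1) := by
    unfold labelFreq
    rw [hSy, Finset.card_sdiff_of_subset hIJAy, Finset.card_union_of_disjoint hIJdisj, hIcard, hJcard]
    have := hAlcard y
    unfold labelFreq at this
    omega
  have hAls_disj : Disjoint (Al ls) (I ∪ J) := by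
    rw [Finset.disjoint_left]
    intro i hi hiIJ
    have h1 := (Finset.mem_filter.1 hi).2.2
    have h2 := (Finset.mem_filter.1 (hIJAy hiIJ)).2.2
    exact hlsne (h1 ▸ h2)
  have hSls : Finset.univ.filter
      (fun i : Fin m => (subCloud m r Q i).Nonempty ∧ F (subCloud m r Q i) = ls) =
      Al ls ∪ (I ∪ J) := by
    ext i
    by_cases hiI : i ∈ I
    · simp [Finset.mem_filter, Finset.mem_union, hiI, hFQ1 i hiI, hQne1 i hiI]
    · by_cases hiJ : i ∈ J
      · simp [Finset.mem_filter, Finset.mem_union, hiJ, hFQ2 i hiJ, hQne2 i hiJ]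
      · simp [Finset.mem_filter, Finset.mem_union, hiI, hiJ,
          hsub3 i hiI hiJ, hFP i, hAl]
  have hMls' : labelFreq m r F Q ls = labelFreq m r f P ls + 2 * (t + 1) := by
    unfold labelFreq
    rw [hSls, Finset.card_union_of_disjoint hAls_disj,
      Finset.card_union_of_disjoint hIJdisj, hIcard, hJcard]
    have := hAlcard ls
    unfold labelFreq at this
    omega
  -- cardinalities of Q and the perturbation size
  have hpinj : Set.InjOn p I := by
    intro a _ b _ hab
    rw [← hrp a, hab, hrp b]
  have heinj : Set.InjOn e J := by
    intro a _ b _ hab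
    rw [← hre a, hab, hre b]
  have hIpcard : (I.image p).card = t + 1 := by
    rw [Finset.card_image_of_injOn hpinj, hIcard]
  have hIpsub : I.image p ⊆ P := by
    intro x hx
    obtain ⟨k, _, rfl⟩ := Finset.mem_image.1 hx
    exact hpP k
  have hJe_disj : Disjoint P (J.image e) := by
    rw [Finset.disjoint_right]
    intro x hx hxP
    obtain ⟨k, _, rfl⟩ := Finset.mem_image.1 hx
    exact he k hxP
  have hle1 : t + 1 ≤ P.card := by
    have := Finset.card_le_card hIpsub
    omega
  have hQcard : Q.card = P.card := by
    rw [hQdef, Finset.card_union_of_disjoint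
      (Finset.disjoint_of_subset_left Finset.sdiff_subset hJe_disj),
      Finset.card_sdiff_of_subset hIpsub, Finset.card_image_of_injOn heinj, hIpcard, hJcard]
    omega
  have hPQinter : P ∩ Q = P \ I.image p := by
    ext x
    simp only [Finset.mem_inter, hQdef, Finset.mem_union, Finset.mem_sdiff]
    constructor
    · rintro ⟨hxP, h | hxe⟩
      · exact h
      · exact absurd hxe (Finset.disjoint_left.1 hJe_disj hxP)
    · intro h
      exact ⟨h.1, Or.inl h⟩
  have hpert : pertSize P Q = t + 1 := by
    unfold pertSize
    rw [hPQinter, Finset.card_sdiff_of_subset hIpsub, hQcard, hIpcard, max_self]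
    omega
  -- the key inequality
  have hkey : labelFreq m r F Q y < labelFreq m r F Q ls + (if ls < y then 1 else 0) := by
    rw [hMls', hMy']
    have h4 : G < 4 * (t + 1) := by omega
    omega
  -- conclusion
  refine ⟨F, Q, hfreq, hQcard, hpert, ?_⟩
  rw [hensP]
  intro hcon
  have hymem' := ensemble_mem m r F Q
  rw [hcon] at hymem'
  have hmax' : ∀ l, labelFreq m r F Q l ≤ labelFreq m r F Q y := (Finset.mem_filter.1 hymem').2
  by_cases hlt : ls < y
  · rw [if_pos hlt] at hkey
    have h1 : labelFreq m r F Q ls = labelFreq m r F Q y := by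
      have := hmax' ls; omega
    have h2 : ensemble m r F Q ≤ ls :=
      ensemble_le m r F Q ls (fun l' => le_trans (hmax' l') h1.ge)
    rw [hcon] at h2
    exact absurd h2 (not_le.2 hlt)
  · rw [if_neg hlt] at hkey
    have := hmax' ls
    omega
end
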